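/- arXiv:2112.07456 — 5 statements merged into one kernel-verified Lean document; each statement's English description precedes it below -/
import Mathlib

section
/- Let v₁ > v₂ > ... > vₙ > 0 and w₁ > w₂ > ... > wₙ > 0 be strictly decreasing positive real sequences. Then for every nonzero n×n real matrix M that is doubly hyperdominant (off-diagonal entries ≤ 0, all row sums ≥ 0, all column sums ≥ 0), we have ∑_{i,j} M_{ij} v_i w_j > 0. -/
/-!
Write `v i = ∑_{k ≥ i} a k` and `w j = ∑_{l ≥ j} b l` with all `a k, b l > 0` (consecutive
differences of the strictly decreasing sequences). Summation by parts in both indices turns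
`∑ M i j v i w j` into `∑ a k b l S k l`, where `S k l` is the sum of the entries of the upper-left
`k × l` corner of `M`. Each corner sum is nonnegative: if `k ≤ l`, every row of the corner misses
only off-diagonal entries of its full row, which has nonnegative sum; the case `l ≤ k` is the same
argument for columns. The corner sums determine `M`, so they are not all zero when `M ≠ 0`.
-/

open Finset

theorem Finset.eq_zero_of_forall_sum_Iic_eq_zero {α M : Type*} [PartialOrder α]
    [LocallyFiniteOrderBot α] [WellFoundedLT α] [AddCommMonoid M] {f : α → M}
    (h : ∀ a, ∑ x ∈ Iic a, f x = 0) : f = 0 := by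
  funext a
  induction a using WellFoundedLT.induction with
  | _ a ih =>
    rw [Pi.zero_apply, ← h a, ← add_sum_Iio_eq_sum_Iic,
      sum_eq_zero fun x hx => ih x (mem_Iio.mp hx), add_zero]

theorem Finset.sum_nonneg_of_compl_nonpos {ι M : Type*} [Fintype ι] [AddCommGroup M]
    [PartialOrder M] [IsOrderedAddMonoid M] {f : ι → M} (s : Finset ι)
    (hf : 0 ≤ ∑ i, f i) (hcompl : ∀ i ∉ s, f i ≤ 0) : 0 ≤ ∑ i ∈ s, f i := by
  classical
  have hsc : ∑ i ∈ sᶜ, f i ≤ 0 := sum_nonpos fun i hi => hcompl i (mem_compl.mp hi)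
  rw [← sum_add_sum_compl s f] at hf
  calc (0 : M) ≤ ∑ i ∈ s, f i + ∑ i ∈ sᶜ, f i := hf
    _ ≤ ∑ i ∈ s, f i := add_le_of_le_of_nonpos le_rfl hsc

theorem Finset.sum_mul_sum_Ici {ι R : Type*} [Fintype ι] [Preorder ι] [LocallyFiniteOrderTop ι]
    [LocallyFiniteOrderBot ι] [NonUnitalNonAssocSemiring R] (x a : ι → R) :
    ∑ i, x i * ∑ k ∈ Ici i, a k = ∑ k, (∑ i ∈ Iic k, x i) * a k := by
  simp_rw [mul_sum, sum_mul]
  exact sum_comm' fun i k => by simp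

theorem Fin.exists_pos_eq_sum_Ici {n : ℕ} {G : Type*} [AddCommGroup G] [PartialOrder G]
    [IsOrderedAddMonoid G] {v : Fin n → G} (hv : StrictAnti v) (hpos : ∀ i, 0 < v i) :
    ∃ a : Fin n → G, (∀ k, 0 < a k) ∧ v = fun i => ∑ k ∈ Ici i, a k := by
  -- extend `v` by zero to `ℕ` and take consecutive differences
  let V : ℕ → G := fun m => if h : m < n then v ⟨m, h⟩ else 0
  refine ⟨fun k => V k - V (k + 1), fun k => ?_, funext fun i => ?_⟩
  · by_cases h : (k : ℕ) + 1 < n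
    · simpa [V, h] using hv (show k < ⟨k + 1, h⟩ from Fin.lt_def.mpr (Nat.lt_add_one _))
    · simpa [V, h] using hpos k
  · have hmap := sum_map (Ici i) Fin.valEmbedding (fun m => V m - V (m + 1))
    rw [Fin.map_valEmbedding_Ici] at hmap
    calc v i = V i - V n := by simp [V]
      _ = ∑ m ∈ Ico (i : ℕ) n, (V m - V (m + 1)) := by
        rw [← neg_sub, ← sum_Ico_sub _ i.is_le', ← sum_neg_distrib]
        simp only [neg_sub]
      _ = ∑ k ∈ Ici i, (V k - V (k + 1)) := hmap

namespace Matrix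

variable {m n R : Type*}

section Preorder

variable [Preorder m] [Preorder n] [LocallyFiniteOrderBot m] [LocallyFiniteOrderBot n]

def cornerSum [AddCommMonoid R] (M : Matrix m n R) (k : m) (l : n) : R :=
  ∑ i ∈ Iic k, ∑ j ∈ Iic l, M i j

theorem cornerSum_transpose [AddCommMonoid R] (M : Matrix m n R) (k : m) (l : n) :
    Mᵀ.cornerSum l k = M.cornerSum k l :=
  sum_comm

theorem sum_sum_mul_sum_Ici_mul_sum_Ici [Fintype m] [Fintype n] [LocallyFiniteOrderTop m]
    [LocallyFiniteOrderTop n] [CommSemiring R] (M : Matrix m n R) (a : m → R) (b : n → R) :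
    ∑ i, ∑ j, M i j * (∑ k ∈ Ici i, a k) * (∑ l ∈ Ici j, b l) =
      ∑ k, ∑ l, a k * b l * M.cornerSum k l := by
  calc ∑ i, ∑ j, M i j * (∑ k ∈ Ici i, a k) * (∑ l ∈ Ici j, b l)
      = ∑ i, (∑ l, (∑ j ∈ Iic l, M i j) * b l) * ∑ k ∈ Ici i, a k := by
        refine sum_congr rfl fun i _ => ?_
        rw [← sum_mul_sum_Ici, sum_mul]
        exact sum_congr rfl fun j _ => by ring
    _ = ∑ k, (∑ i ∈ Iic k, ∑ l, (∑ j ∈ Iic l, M i j) * b l) * a k := sum_mul_sum_Ici _ _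
    _ = ∑ k, ∑ l, a k * b l * M.cornerSum k l := by
        refine sum_congr rfl fun k _ => ?_
        rw [sum_comm, sum_mul]
        unfold cornerSum
        refine sum_congr rfl fun l _ => ?_
        rw [← sum_mul]
        ring

end Preorder

theorem eq_zero_of_cornerSum_eq_zero [PartialOrder m] [PartialOrder n] [LocallyFiniteOrderBot m]
    [LocallyFiniteOrderBot n] [WellFoundedLT m] [WellFoundedLT n] [AddCommMonoid R]
    {M : Matrix m n R} (h : ∀ k l, M.cornerSum k l = 0) : M = 0 := by
  classical
  have hM : (fun p : m × n => M p.1 p.2) = 0 :=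
    eq_zero_of_forall_sum_Iic_eq_zero fun p => by
      rw [Iic_prod_def, sum_product]
      exact h p.1 p.2
  ext i j
  exact congrFun hM (i, j)

section HyperdominantSquare

variable {ι : Type*} [LinearOrder ι] [Fintype ι] [LocallyFiniteOrderBot ι]
  [AddCommGroup R] [PartialOrder R] [IsOrderedAddMonoid R] {M : Matrix ι ι R}

theorem cornerSum_nonneg_of_le (hoff : ∀ i j, i ≠ j → M i j ≤ 0) (hrow : ∀ i, 0 ≤ ∑ j, M i j)
    {k l : ι} (hkl : k ≤ l) : 0 ≤ M.cornerSum k l :=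
  sum_nonneg fun i hi => sum_nonneg_of_compl_nonpos _ (hrow i) fun j hj =>
    hoff i j ((mem_Iic.mp hi).trans_lt (hkl.trans_lt (not_le.mp (mem_Iic.not.mp hj)))).ne

theorem cornerSum_nonneg (hoff : ∀ i j, i ≠ j → M i j ≤ 0) (hrow : ∀ i, 0 ≤ ∑ j, M i j)
    (hcol : ∀ j, 0 ≤ ∑ i, M i j) (k l : ι) : 0 ≤ M.cornerSum k l := by
  rcases le_total k l with hkl | hlk
  · exact cornerSum_nonneg_of_le hoff hrow hkl
  · rw [← cornerSum_transpose]
    exact cornerSum_nonneg_of_le (fun i j hij => hoff j i hij.symm) hcol hlk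

end HyperdominantSquare

end Matrix

theorem stmt2 {n : ℕ} (v w : Fin n → ℝ)
    (hv : StrictAnti v) (hvpos : ∀ i, 0 < v i)
    (hw : StrictAnti w) (hwpos : ∀ i, 0 < w i)
    (M : Matrix (Fin n) (Fin n) ℝ) (hM0 : M ≠ 0)
    (hoff : ∀ i j, i ≠ j → M i j ≤ 0)
    (hrow : ∀ i, 0 ≤ ∑ j, M i j)
    (hcol : ∀ j, 0 ≤ ∑ i, M i j) :
    0 < ∑ i, ∑ j, M i j * v i * w j := by
  obtain ⟨a, ha, rfl⟩ := Fin.exists_pos_eq_sum_Ici hv hvpos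
  obtain ⟨b, hb, rfl⟩ := Fin.exists_pos_eq_sum_Ici hw hwpos
  rw [M.sum_sum_mul_sum_Ici_mul_sum_Ici]
  have hS := M.cornerSum_nonneg hoff hrow hcol
  obtain ⟨k, l, hkl⟩ : ∃ k l, 0 < M.cornerSum k l := by
    by_contra! h
    exact hM0 (Matrix.eq_zero_of_cornerSum_eq_zero fun k l => (h k l).antisymm (hS k l))
  have hterm : ∀ k l, 0 ≤ a k * b l * M.cornerSum k l := fun k l =>
    mul_nonneg (mul_pos (ha k) (hb l)).le (hS k l)
  refine sum_pos' (fun k _ => sum_nonneg fun l _ => hterm k l) ⟨k, mem_univ k, ?_⟩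
  exact sum_pos' (fun l _ => hterm k l) ⟨l, mem_univ l, mul_pos (mul_pos (ha k) (hb l)) hkl⟩
end

section
/- Every n×n real matrix M that is doubly hyperdominant with zero excess (off-diagonal entries ≤ 0, all row and column sums equal to 0) can be written as a conic (nonnegative) combination of matrices of the form I - P where P ranges over n×n permutation matrices. -/
/-!
Since the off-diagonal entries of `M` are nonpositive and its row and column sums vanish,
`A = 1 - c • M` is doubly stochastic as soon as `0 ≤ c` and `c * M i i ≤ 1` for every `i`.
Birkhoff's theorem writes `A` as a convex combination `∑ w σ • P σ` of permutation matrices;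
because the weights sum to `1`, this gives `1 - A = ∑ w σ • (1 - P σ)`, and then
`M = c⁻¹ • (1 - A)` is the required conic combination.
-/

open Finset Matrix

section DoublyStochastic

variable {R n : Type*} [Fintype n] [DecidableEq n]

lemma one_sub_smul_mem_doublyStochastic [Ring R] [PartialOrder R] [IsOrderedRing R]
    {M : Matrix n n R} (hoff : ∀ i j, i ≠ j → M i j ≤ 0)
    (hrow : ∀ i, ∑ j, M i j = 0) (hcol : ∀ j, ∑ i, M i j = 0)
    {c : R} (hc : 0 ≤ c) (hdiag : ∀ i, c * M i i ≤ 1) :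
    1 - c • M ∈ doublyStochastic R n := by
  refine mem_doublyStochastic_iff_sum.2 ⟨fun i j => ?_, fun i => ?_, fun j => ?_⟩
  · rcases eq_or_ne i j with rfl | hij
    · simpa using hdiag i
    · simpa [one_apply_ne hij] using mul_nonpos_of_nonneg_of_nonpos hc (hoff i j hij)
  · simp [sum_sub_distrib, one_apply, ← mul_sum, hrow]
  · simp [sum_sub_distrib, one_apply, ← mul_sum, hcol]

variable [Field R] [LinearOrder R] [IsStrictOrderedRing R]

lemma exists_one_sub_eq_sum_smul_one_sub_permMatrix {A : Matrix n n R}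
    (hA : A ∈ doublyStochastic R n) :
    ∃ w : Equiv.Perm n → R, (∀ σ, 0 ≤ w σ) ∧ 1 - A = ∑ σ, w σ • (1 - σ.permMatrix R) := by
  obtain ⟨w, hw_nonneg, hw_sum, hwA⟩ := exists_eq_sum_perm_of_mem_doublyStochastic hA
  refine ⟨w, hw_nonneg, ?_⟩
  simp only [smul_sub, sum_sub_distrib, ← sum_smul, hw_sum, one_smul, hwA]

lemma exists_eq_sum_smul_one_sub_permMatrix {M : Matrix n n R}
    (hoff : ∀ i j, i ≠ j → M i j ≤ 0)
    (hrow : ∀ i, ∑ j, M i j = 0) (hcol : ∀ j, ∑ i, M i j = 0) :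
    ∃ α : Equiv.Perm n → R, (∀ σ, 0 ≤ α σ) ∧ M = ∑ σ, α σ • (1 - σ.permMatrix R) := by
  set d : R := 1 + ∑ i, |M i i|
  have hd : 0 < d := by positivity
  have hdiag : ∀ i, d⁻¹ * M i i ≤ 1 := fun i => by
    rw [inv_mul_le_iff₀ hd, mul_one]
    calc M i i ≤ |M i i| := le_abs_self _
      _ ≤ ∑ i, |M i i| := single_le_sum (fun i _ => abs_nonneg (M i i)) (mem_univ i)
      _ ≤ d := le_add_of_nonneg_left zero_le_one
  obtain ⟨w, hw_nonneg, hw⟩ := exists_one_sub_eq_sum_smul_one_sub_permMatrix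
    (one_sub_smul_mem_doublyStochastic hoff hrow hcol (inv_nonneg.2 hd.le) hdiag)
  refine ⟨fun σ => d * w σ, fun σ => mul_nonneg hd.le (hw_nonneg σ), ?_⟩
  calc M = d • (1 - (1 - d⁻¹ • M)) := by rw [sub_sub_cancel, smul_inv_smul₀ hd.ne']
    _ = _ := by simp only [hw, smul_sum, smul_smul]

end DoublyStochastic

lemma Equiv.Perm.permMatrix_eq_of {n R : Type*} [DecidableEq n] [Zero R] [One R]
    (σ : Equiv.Perm n) :
    σ.permMatrix R = Matrix.of fun i j => if σ i = j then (1 : R) else 0 := by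
  ext i j
  simp [Equiv.Perm.permMatrix, PEquiv.toMatrix_apply]

theorem stmt5 {n : ℕ} (M : Matrix (Fin n) (Fin n) ℝ)
    (hoff : ∀ i j, i ≠ j → M i j ≤ 0)
    (hrow : ∀ i, ∑ j, M i j = 0)
    (hcol : ∀ j, ∑ i, M i j = 0) :
    ∃ (k : ℕ) (α : Fin k → ℝ) (σ : Fin k → Equiv.Perm (Fin n)),
      (∀ t, 0 ≤ α t) ∧
      M = ∑ t, α t • ((1 : Matrix (Fin n) (Fin n) ℝ) -
        Matrix.of fun i j => if σ t i = j then (1 : ℝ) else 0) := by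
  obtain ⟨α, hα, hM⟩ := exists_eq_sum_smul_one_sub_permMatrix hoff hrow hcol
  let e := (Fintype.equivFin (Equiv.Perm (Fin n))).symm
  refine ⟨_, α ∘ e, e, fun t => hα (e t), ?_⟩
  simp only [Function.comp_apply, ← Equiv.Perm.permMatrix_eq_of]
  rw [hM, e.sum_comp (fun σ => α σ • (1 - σ.permMatrix ℝ))]
end

section
/- Let M be an n×n doubly hyperdominant matrix with zero excess which is nonzero, and let v₁ > ... > vₙ > 0 be strictly decreasing positive reals. Then the quadratic form ∑_{i,j} m_{ij} v_i v_j is strictly positive. -/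
/-!
With zero row and column sums, `2 ∑ m_ij v_i v_j = ∑ (-m_ij) (v_i - v_j)²`. Every term on the
right is nonnegative, and a nonzero such matrix has a negative off-diagonal entry `m_ab`, whose
term is positive as soon as `v_a ≠ v_b`.
-/

open Finset

variable {ι : Type*} [Fintype ι]

theorem Matrix.exists_offDiag_neg_of_ne_zero {R : Type*} [AddCommGroup R] [LinearOrder R]
    [IsOrderedAddMonoid R] {M : Matrix ι ι R} (hM0 : M ≠ 0)
    (hoff : ∀ i j, i ≠ j → M i j ≤ 0) (hrow : ∀ i, ∑ j, M i j = 0) :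
    ∃ a b, a ≠ b ∧ M a b < 0 := by
  by_contra! h
  have hzero : ∀ i j, i ≠ j → M i j = 0 := fun i j hij =>
    le_antisymm (hoff i j hij) (h i j hij)
  refine hM0 (Matrix.ext fun i j => ?_)
  rcases eq_or_ne i j with rfl | hij
  · rw [Matrix.zero_apply, ← hrow i, sum_eq_single i (fun j _ hj => hzero i j hj.symm) (by simp)]
  · exact hzero i j hij

theorem Matrix.sum_neg_mul_sub_sq_eq {R : Type*} [CommRing R] (M : Matrix ι ι R) (v : ι → R)
    (hrow : ∀ i, ∑ j, M i j = 0) (hcol : ∀ j, ∑ i, M i j = 0) :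
    ∑ i, ∑ j, -M i j * (v i - v j) ^ 2 = 2 * ∑ i, ∑ j, M i j * v i * v j := by
  have hrow' : ∑ i, ∑ j, M i j * v i ^ 2 = 0 :=
    sum_eq_zero fun i _ => by rw [← sum_mul, hrow i, zero_mul]
  have hcol' : ∑ i, ∑ j, M i j * v j ^ 2 = 0 := by
    rw [sum_comm]
    exact sum_eq_zero fun j _ => by rw [← sum_mul, hcol j, zero_mul]
  have expand : ∀ i j, -M i j * (v i - v j) ^ 2
      = 2 * (M i j * v i * v j) - M i j * v i ^ 2 - M i j * v j ^ 2 :=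
    fun i j => by ring
  simp only [expand, sum_sub_distrib, hrow', hcol', ← mul_sum, sub_zero]

theorem Matrix.sum_neg_mul_sub_sq_pos {R : Type*} [CommRing R] [LinearOrder R]
    [IsStrictOrderedRing R] {M : Matrix ι ι R} {v : ι → R} (hv : Function.Injective v)
    (hoff : ∀ i j, i ≠ j → M i j ≤ 0) {a b : ι} (hab : a ≠ b) (hneg : M a b < 0) :
    0 < ∑ i, ∑ j, -M i j * (v i - v j) ^ 2 := by
  have hnonneg : ∀ i j, 0 ≤ -M i j * (v i - v j) ^ 2 := by
    intro i j
    rcases eq_or_ne i j with rfl | hij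
    · simp
    · exact mul_nonneg (neg_nonneg.2 (hoff i j hij)) (sq_nonneg _)
  have hab_pos : 0 < -M a b * (v a - v b) ^ 2 :=
    mul_pos (neg_pos.2 hneg) (pow_two_pos_of_ne_zero (sub_ne_zero.2 (hv.ne hab)))
  exact sum_pos' (fun i _ => sum_nonneg fun j _ => hnonneg i j)
    ⟨a, mem_univ a, sum_pos' (fun j _ => hnonneg a j) ⟨b, mem_univ b, hab_pos⟩⟩

theorem stmt8_general {n : ℕ} (v : Fin n → ℝ)
    (hv : StrictAnti v)
    (M : Matrix (Fin n) (Fin n) ℝ) (hM0 : M ≠ 0)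
    (hoff : ∀ i j, i ≠ j → M i j ≤ 0)
    (hrow : ∀ i, ∑ j, M i j = 0)
    (hcol : ∀ j, ∑ i, M i j = 0) :
    0 < ∑ i, ∑ j, M i j * v i * v j := by
  obtain ⟨a, b, hab, hneg⟩ := Matrix.exists_offDiag_neg_of_ne_zero hM0 hoff hrow
  have hpos := Matrix.sum_neg_mul_sub_sq_pos hv.injective hoff hab hneg
  rw [Matrix.sum_neg_mul_sub_sq_eq M v hrow hcol] at hpos
  linarith

theorem stmt8 {n : ℕ} (v : Fin n → ℝ)
    (hv : StrictAnti v) (hvpos : ∀ i, 0 < v i)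
    (M : Matrix (Fin n) (Fin n) ℝ) (hM0 : M ≠ 0)
    (hoff : ∀ i j, i ≠ j → M i j ≤ 0)
    (hrow : ∀ i, ∑ j, M i j = 0)
    (hcol : ∀ j, ∑ i, M i j = 0) :
    0 < ∑ i, ∑ j, M i j * v i * v j :=
  stmt8_general v hv M hM0 hoff hrow hcol
end

section
/- Let σ₀, σ₁, ..., σ_N : H → ℝ be quadratic forms on a real inner product space, given by σ_k(f) = ⟨f, Π_k f⟩ with Π_k bounded self-adjoint linear operators. Suppose the closure of the set K := {(σ₀(f), ..., σ_N(f)) : f ∈ H} is convex, and there exists f* with σ_k(f*) > 0 for k = 1,...,N. If σ₀(f) ≤ 0 whenever σ_k(f) ≥ 0 for all k = 1,...,N, then there exist α₁, ..., α_N ≥ 0 with σ₀(f) + ∑_{k=1}^N α_k σ_k(f) ≤ 0 for all f ∈ H. -/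
/-!
The image `K` of `f ↦ (σ₀ f, …, σ_N f)` misses the open positive orthant: a point of `K` with all
coordinates positive would violate the hypothesis on `σ₀`. Since the orthant is open, it also misses
the convex set `closure K`, and Hahn–Banach separates the two by a functional `x ↦ -(c ⬝ᵥ x)`.
Because the orthant is a cone containing `0` in its closure, `c ≥ 0` and `c ⬝ᵥ x ≤ 0` on `K`.
Evaluating at the Slater point `f*`, whose coordinates `1, …, N` are positive, forces `c₀ > 0`, and
`αₖ = cₖ / c₀` are the multipliers.
-/

open Set

theorem nonpos_of_forall_pos_mul_le {a u : ℝ} (h : ∀ t : ℝ, 0 < t → t * a ≤ u) : a ≤ 0 := by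
  by_contra! ha
  have := h ((|u| + 1) / a) (by positivity)
  rw [div_mul_cancel₀ _ ha.ne'] at this
  linarith [le_abs_self u]

theorem LinearMap.apply_eq_dotProduct_single {ι R : Type*} [Fintype ι] [DecidableEq ι]
    [CommSemiring R] (φ : (ι → R) →ₗ[R] R) (x : ι → R) :
    φ x = (fun i => φ (Pi.single i 1)) ⬝ᵥ x := by
  conv_lhs => rw [← Finset.univ_sum_single x]
  rw [map_sum]
  refine Finset.sum_congr rfl fun i _ => ?_
  rw [mul_comm, ← smul_eq_mul, ← map_smul, ← Pi.single_smul', smul_eq_mul, mul_one]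

theorem pos_of_dotProduct_nonpos {ι : Type*} [Fintype ι] {c x : ι → ℝ} {j : ι} (hc : 0 ≤ c)
    (hc0 : c ≠ 0) (hx : ∀ i, i ≠ j → 0 < x i) (h : c ⬝ᵥ x ≤ 0) : 0 < c j := by
  refine (hc j).lt_of_ne fun hcj => hc0 ?_
  have hterm : ∀ i ∈ Finset.univ, 0 ≤ c i * x i := fun i _ => by
    rcases eq_or_ne i j with rfl | hij
    · simp [← hcj]
    · exact mul_nonneg (hc i) (hx i hij).le
  have hzero := (Finset.sum_eq_zero_iff_of_nonneg hterm).1 (h.antisymm (Finset.sum_nonneg hterm))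
  funext i
  rcases eq_or_ne i j with rfl | hij
  · exact hcj.symm
  · exact (mul_eq_zero.1 (hzero i (Finset.mem_univ i))).resolve_right (hx i hij).ne'

theorem exists_nonneg_dotProduct_nonpos_of_convex_closure {ι : Type*} [Fintype ι]
    {K : Set (ι → ℝ)} (hK : Convex ℝ (closure K)) (hne : K.Nonempty)
    (hpos : ∀ x ∈ K, ∃ i, x i ≤ 0) : ∃ c : ι → ℝ, 0 ≤ c ∧ c ≠ 0 ∧ ∀ x ∈ K, c ⬝ᵥ x ≤ 0 := by
  classical
  set C : Set (ι → ℝ) := univ.pi fun _ => Ioi 0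
  have hCopen : IsOpen C := isOpen_set_pi finite_univ fun _ _ => isOpen_Ioi
  have hdisj : Disjoint C (closure K) := by
    refine Disjoint.closure_right (disjoint_right.2 fun x hx hxC => ?_) hCopen
    obtain ⟨i, hi⟩ := hpos x hx
    exact hi.not_gt (hxC i (mem_univ i))
  obtain ⟨φ, u, hφC, hφK⟩ :=
    geometric_hahn_banach_open (convex_pi fun _ _ => convex_Ioi 0) hCopen hK hdisj
  have hφ_le : ∀ x, 0 ≤ x → φ x ≤ u := by
    have : closure C ⊆ {x | φ x ≤ u} :=
      closure_minimal (fun x hx => (hφC x hx).le) (isClosed_le φ.continuous continuous_const)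
    intro x hx
    apply this
    rw [closure_pi_set]
    exact mem_univ_pi.2 fun i => by rw [closure_Ioi]; exact hx i
  have hu : 0 ≤ u := by simpa using hφ_le 0 le_rfl
  have hφ_single : ∀ i, φ (Pi.single i 1) ≤ 0 := fun i =>
    nonpos_of_forall_pos_mul_le fun t ht => by
      have := hφ_le (t • Pi.single i 1) (smul_nonneg ht.le (Pi.single_nonneg.2 zero_le_one))
      rwa [map_smul, smul_eq_mul] at this
  set c : ι → ℝ := -fun i => φ (Pi.single i 1)
  have hφ : ∀ x, φ x = -(c ⬝ᵥ x) := fun x => by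
    rw [neg_dotProduct, neg_neg]
    exact LinearMap.apply_eq_dotProduct_single (φ : (ι → ℝ) →ₗ[ℝ] ℝ) x
  refine ⟨c, fun i => neg_nonneg.2 (hφ_single i), fun hc => ?_, fun x hx => ?_⟩
  · obtain ⟨x, hx⟩ := hne
    have h1 := hφC 1 fun _ _ => mem_Ioi.2 one_pos
    have h2 := hφK x (subset_closure hx)
    simp only [hφ, hc, zero_dotProduct, neg_zero] at h1 h2
    linarith
  · linarith [hφ x, hφK x (subset_closure hx)]

theorem stmt10_general {H : Type*} [NormedAddCommGroup H] [InnerProductSpace ℝ H]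
    (N : ℕ) (Pk : Fin (N+1) → (H →L[ℝ] H))
    (hK : Convex ℝ (closure {x : Fin (N+1) → ℝ | ∃ f : H, ∀ k, x k = inner ℝ f (Pk k f)}))
    (fs : H) (hfs : ∀ k : Fin (N+1), k ≠ 0 → (0 : ℝ) < inner ℝ fs (Pk k fs))
    (hmain : ∀ f : H, (∀ k : Fin (N+1), k ≠ 0 → (0 : ℝ) ≤ inner ℝ f (Pk k f)) →
      (inner ℝ f (Pk 0 f) : ℝ) ≤ 0) :
    ∃ α : Fin N → ℝ, (∀ k, 0 ≤ α k) ∧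
      ∀ f : H, (inner ℝ f (Pk 0 f) : ℝ) + ∑ k : Fin N, α k * (inner ℝ f (Pk k.succ f) : ℝ) ≤ 0 := by
  obtain ⟨c, hc, hc0, hcK⟩ := exists_nonneg_dotProduct_nonpos_of_convex_closure hK
    ⟨_, 0, fun _ => rfl⟩ (by
      rintro x ⟨f, hf⟩
      by_contra! h
      simp only [hf] at h
      exact (h 0).not_ge (hmain f fun k _ => (h k).le))
  have hc0pos : 0 < c 0 := pos_of_dotProduct_nonpos hc hc0 hfs (hcK _ ⟨fs, fun _ => rfl⟩)
  refine ⟨fun k => c k.succ / c 0, fun k => div_nonneg (hc _) hc0pos.le, fun f => ?_⟩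
  have hf := hcK _ ⟨f, fun _ => rfl⟩
  rw [dotProduct, Fin.sum_univ_succ] at hf
  refine nonpos_of_mul_nonpos_left (le_of_eq_of_le ?_ hf) hc0pos
  rw [add_mul, Finset.sum_mul]
  field_simp

theorem stmt10 {H : Type*} [NormedAddCommGroup H] [InnerProductSpace ℝ H] [CompleteSpace H]
    (N : ℕ) (Pk : Fin (N+1) → (H →L[ℝ] H))
    (hsa : ∀ k, IsSelfAdjoint (Pk k))
    (hK : Convex ℝ (closure {x : Fin (N+1) → ℝ | ∃ f : H, ∀ k, x k = inner ℝ f (Pk k f)}))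
    (fs : H) (hfs : ∀ k : Fin (N+1), k ≠ 0 → (0 : ℝ) < inner ℝ fs (Pk k fs))
    (hmain : ∀ f : H, (∀ k : Fin (N+1), k ≠ 0 → (0 : ℝ) ≤ inner ℝ f (Pk k f)) →
      (inner ℝ f (Pk 0 f) : ℝ) ≤ 0) :
    ∃ α : Fin N → ℝ, (∀ k, 0 ≤ α k) ∧
      ∀ f : H, (inner ℝ f (Pk 0 f) : ℝ) + ∑ k : Fin N, α k * (inner ℝ f (Pk k.succ f) : ℝ) ≤ 0 :=
  stmt10_general N Pk hK fs hfs hmain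
end

section
/- Let σ_k(f) = ⟨f, Π_k f⟩ for k = 0,...,N be quadratic forms on ℓ²(ℤ,ℝ) where each Π_k is a bounded self-adjoint linear operator commuting with the shift S_{T·T₀} for fixed positive integers T, T₀. Then the closure of the set K = {(σ₀(f),...,σ_N(f)) : f ∈ ℓ²} is convex. -/
/-!
Given `f₁, f₂` and `a + b = 1`, put `gₙ = √a • f₁ + √b • Uₙ f₂`, where `Uₙ` is the shift by
`n·T·T₀`. Each `Π_k` commutes with `Uₙ`, and `Uₙ` is an isometry, so `σ_k(Uₙ f₂) = σ_k(f₂)` and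
`σ_k(gₙ) = a σ_k(f₁) + b σ_k(f₂) + 2√(ab) ⟪Uₙ f₂, Π_k f₁⟫`. The shifted sequence `Uₙ f₂` tends
weakly to `0`, so `σ(gₙ) → a σ(f₁) + b σ(f₂)`: every convex combination of two points of `K`
lies in the closure of `K`, hence the closure is convex.
-/

open Filter Topology

theorem convex_closure_of_forall_add_smul_mem_closure {E : Type*} [AddCommGroup E]
    [Module ℝ E] [TopologicalSpace E] [ContinuousAdd E] [ContinuousSMul ℝ E] {s : Set E}
    (hs : ∀ x ∈ s, ∀ y ∈ s, ∀ a b : ℝ, 0 ≤ a → 0 ≤ b → a + b = 1 → a • x + b • y ∈ closure s) :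
    Convex ℝ (closure s) := by
  intro x hx y hy a b ha hb hab
  have hf : Continuous (Function.uncurry fun x' y' : E => a • x' + b • y') :=
    (continuous_fst.const_smul _).add (continuous_snd.const_smul _)
  simpa only [closure_closure] using
    map_mem_closure₂ hf hx hy fun x' hx' y' hy' => hs x' hx' y' hy' a b ha hb hab

section JointNumericalRange

variable {E ι : Type*} [NormedAddCommGroup E] [InnerProductSpace ℝ E]

open scoped RealInnerProductSpace

def jointNumericalRange (P : ι → E →ₗ[ℝ] E) : Set (ι → ℝ) :=
  {x | ∃ f : E, ∀ k, x k = ⟪f, P k f⟫}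

theorem LinearMap.IsSymmetric.inner_smul_add_smul_map {T : E →ₗ[ℝ] E} (hT : T.IsSymmetric)
    (a b : ℝ) (x y : E) :
    ⟪a • x + b • y, T (a • x + b • y)⟫ =
      a ^ 2 * ⟪x, T x⟫ + b ^ 2 * ⟪y, T y⟫ + 2 * a * b * ⟪y, T x⟫ := by
  simp only [map_add, map_smul, inner_add_left, inner_add_right, real_inner_smul_left,
    real_inner_smul_right, ← hT x y, real_inner_comm (T x) y]
  ring

theorem convex_closure_jointNumericalRange {α : Type*} {l : Filter α} [l.NeBot]
    {P : ι → E →ₗ[ℝ] E} (hP : ∀ k, (P k).IsSymmetric) (U : α → E → E)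
    (hUP : ∀ n k f, ⟪U n f, P k (U n f)⟫ = ⟪f, P k f⟫)
    (hU : ∀ f u, Tendsto (fun n => ⟪U n f, u⟫) l (𝓝 0)) :
    Convex ℝ (closure (jointNumericalRange P)) := by
  refine convex_closure_of_forall_add_smul_mem_closure ?_
  rintro x ⟨f₁, hf₁⟩ y ⟨f₂, hf₂⟩ a b ha hb -
  let g : α → E := fun n => √a • f₁ + √b • U n f₂
  have hg : ∀ n k, ⟪g n, P k (g n)⟫ = a * x k + b * y k + 2 * √a * √b * ⟪U n f₂, P k f₁⟫ := by
    intro n k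
    rw [(hP k).inner_smul_add_smul_map, hUP, Real.sq_sqrt ha, Real.sq_sqrt hb, hf₁, hf₂]
  refine mem_closure_of_tendsto (b := l) (f := fun n k => ⟪g n, P k (g n)⟫) ?_
    (Eventually.of_forall fun n => ⟨g n, fun k => rfl⟩)
  refine tendsto_pi_nhds.mpr fun k => ?_
  simpa [hg] using ((hU f₂ (P k f₁)).const_mul (2 * √a * √b)).const_add (a * x k + b * y k)

end JointNumericalRange

namespace lp

theorem tendsto_norm_cofinite_zero {α : Type*} {E : α → Type*} [∀ i, NormedAddCommGroup (E i)]
    {p : ENNReal} (hp : 0 < p.toReal) (v : lp E p) : Tendsto (fun i => ‖v i‖) cofinite (𝓝 0) := by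
  have h := ((lp.memℓp v).summable hp).tendsto_cofinite_zero.rpow_const
    (Or.inr (inv_nonneg.mpr hp.le))
  rw [Real.zero_rpow (inv_ne_zero hp.ne')] at h
  exact h.congr fun i => Real.rpow_rpow_inv (norm_nonneg _) hp.ne'

theorem tendsto_inner_zero_of_tendsto_apply_zero {ι α 𝕜 : Type*} [RCLike 𝕜] {G : ι → Type*}
    [∀ i, NormedAddCommGroup (G i)] [∀ i, InnerProductSpace 𝕜 (G i)] {l : Filter α}
    {w : α → lp G 2} {C : ℝ} (hC : ∀ n, ‖w n‖ ≤ C) (hw : ∀ i, Tendsto (fun n => w n i) l (𝓝 0))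
    (u : lp G 2) : Tendsto (fun n => inner 𝕜 (w n) u) l (𝓝 0) := by
  classical
  have hbdd : ∃ C, ∀ n, ‖innerSL 𝕜 (w n)‖ ≤ C :=
    ⟨C, fun n => (innerSL_apply_norm 𝕜 (w n)).trans_le (hC n)⟩
  have hequi : Equicontinuous fun n => ⇑(innerSL 𝕜 (w n)) :=
    ((NormedSpace.equicontinuous_TFAE fun n => innerSL 𝕜 (w n)).out 5 1).mp hbdd
  have hclosed : IsClosed {u : lp G 2 | Tendsto (fun n => inner 𝕜 (w n) u) l (𝓝 0)} :=
    hequi.isClosed_setOfPred_tendsto continuous_const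
  refine hclosed.mem_of_tendsto (lp.hasSum_single ENNReal.ofNat_ne_top u)
    (Eventually.of_forall fun s => ?_)
  simp only [Set.mem_ofPred_eq, inner_sum, lp.inner_single_right]
  simpa using tendsto_finsetSum s fun i _ => (hw i).inner (𝕜 := 𝕜) (tendsto_const_nhds (x := u i))

end lp

local notation "ℓ²(ℤ)" => lp (fun _ : ℤ => ℝ) 2

def IsShift (S : ℤ → ℓ²(ℤ) →L[ℝ] ℓ²(ℤ)) : Prop :=
  ∀ (τ : ℤ) (f : ℓ²(ℤ)) (k : ℤ), S τ f k = f (k - τ)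

namespace IsShift

variable {S : ℤ → ℓ²(ℤ) →L[ℝ] ℓ²(ℤ)}

theorem inner_map_map (hS : IsShift S) (τ : ℤ) (u v : ℓ²(ℤ)) :
    inner ℝ (S τ u) (S τ v) = inner ℝ u v := by
  simp only [lp.inner_eq_tsum, hS _ _ _]
  exact (Equiv.subRight τ).tsum_eq fun k => inner ℝ (u k) (v k)

theorem norm_map (hS : IsShift S) (τ : ℤ) (v : ℓ²(ℤ)) : ‖S τ v‖ = ‖v‖ := by
  rw [@norm_eq_sqrt_re_inner ℝ, @norm_eq_sqrt_re_inner ℝ, hS.inner_map_map]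

theorem natCast_mul_eq_pow (hS : IsShift S) (τ : ℤ) (n : ℕ) : S (n * τ) = S τ ^ n := by
  induction n with
  | zero => ext f k; simp [hS _ _ _]
  | succ n ih =>
    rw [pow_succ, ← ih]
    ext f k
    simp only [ContinuousLinearMap.mul_def, ContinuousLinearMap.comp_apply, hS _ _ _]
    push_cast
    ring_nf

theorem tendsto_inner_zero (hS : IsShift S) {α : Type*} {l : Filter α} {t : α → ℤ}
    (ht : Tendsto t l atTop) (v u : ℓ²(ℤ)) : Tendsto (fun n => inner ℝ (S (t n) v) u) l (𝓝 0) := by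
  refine lp.tendsto_inner_zero_of_tendsto_apply_zero (fun n => (hS.norm_map (t n) v).le)
    (fun k => ?_) u
  have hv : Tendsto (fun m => v m) atBot (𝓝 0) :=
    tendsto_zero_iff_norm_tendsto_zero.mpr <|
      (lp.tendsto_norm_cofinite_zero (by norm_num) v).mono_left (Int.cofinite_eq ▸ le_sup_left)
  have hkt : Tendsto (fun n => k + -t n) l atBot :=
    tendsto_atBot_add_const_left _ k (tendsto_neg_atTop_atBot.comp ht)
  simpa only [hS _ _ _, sub_eq_add_neg, Function.comp_def] using hv.comp hkt

end IsShift

theorem stmt14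
    (S : ℤ → (lp (fun _ : ℤ => ℝ) 2 →L[ℝ] lp (fun _ : ℤ => ℝ) 2))
    (hS : ∀ (τ : ℤ) (f : lp (fun _ : ℤ => ℝ) 2) (k : ℤ), (S τ f) k = f (k - τ))
    (N : ℕ) (T T₀ : ℕ) (hT : 0 < T) (hT₀ : 0 < T₀)
    (Pk : Fin (N+1) → (lp (fun _ : ℤ => ℝ) 2 →L[ℝ] lp (fun _ : ℤ => ℝ) 2))
    (hsa : ∀ k, IsSelfAdjoint (Pk k))
    (hcomm : ∀ k, Pk k ∘L S ((T : ℤ) * (T₀ : ℤ)) = S ((T : ℤ) * (T₀ : ℤ)) ∘L Pk k) :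
    Convex ℝ (closure {x : Fin (N+1) → ℝ |
      ∃ f : lp (fun _ : ℤ => ℝ) 2, ∀ k, x k = inner ℝ f (Pk k f)}) := by
  have hS : IsShift S := hS
  have hτ : 0 < (T : ℤ) * T₀ := mul_pos (by exact_mod_cast hT) (by exact_mod_cast hT₀)
  have hPS (n : ℕ) k f : Pk k (S (n * (T * T₀)) f) = S (n * (T * T₀)) (Pk k f) := by
    rw [hS.natCast_mul_eq_pow]
    exact DFunLike.congr_fun (Commute.pow_right (hcomm k) n).eq f
  have hK : {x : Fin (N+1) → ℝ | ∃ f : ℓ²(ℤ), ∀ k, x k = inner ℝ f (Pk k f)} =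
      jointNumericalRange fun k => (Pk k : ℓ²(ℤ) →ₗ[ℝ] ℓ²(ℤ)) := rfl
  rw [hK]
  exact convex_closure_jointNumericalRange (fun k => (hsa k).isSymmetric)
    (fun n : ℕ => S (n * (T * T₀)))
    (fun n k f => by simp only [ContinuousLinearMap.coe_coe, hPS, hS.inner_map_map])
    (hS.tendsto_inner_zero (tendsto_natCast_atTop_atTop.atTop_mul_const' hτ))
end
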